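/- Let α be a vine function on a lower set L ⊆ ext(G,D), and let V₁, V₂ ∈ ext(G,D) be such that: (a) E(V_i, V_i^c) ∩ |α| = ∅ for i = 1, 2; and (b) every V ∈ ext(G,D) with V ⊆ V₁ ∩ V₂ belongs to L. Then V₁ ∪ V₂ = ι; consequently E(V₁,V₁^c) ∩ E(V₂,V₂^c) = ∅. -/

import Mathlib

namespace Paper

variable {ι Ed : Type*}

/-- The set of edges with one endpoint in `V` and the other in `W`
(a loop at `v` belongs to it iff `v ∈ V ∩ W`). -/
def edgesBetween (ends : Ed → Sym2 ι) (V W : Set ι) : Set Ed :=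
  {e | ∃ a b, ends e = s(a, b) ∧ a ∈ V ∧ b ∈ W}

/-- A set of vertices is connected if it is nonempty and the induced multigraph
on it is connected. -/
def IsConnectedOn (ends : Ed → Sym2 ι) (V : Set ι) : Prop :=
  V.Nonempty ∧ ∀ u ∈ V, ∀ w ∈ V,
    Relation.ReflTransGen (fun a b => a ∈ V ∧ b ∈ V ∧ ∃ e, ends e = s(a, b)) u w

/-- `β^⋆(V) = ∑_{v ∈ V} (φ^⋆(v) - D(v)) + |E(V,V^c)|/2`. -/
noncomputable def beta (ends : Ed → Sym2 ι) (D : ι → ℤ) (φ : ι → ℝ) (V : Set ι) : ℝ :=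
  (∑ᶠ v ∈ V, (φ v - (D v : ℝ))) + ((edgesBetween ends V Vᶜ).ncard : ℝ) / 2

/-- `β⁰ = (β⁺ + β⁻)/2`. -/
noncomputable def betaZero (ends : Ed → Sym2 ι) (D : ι → ℤ) (φp φm : ι → ℝ) (V : Set ι) : ℝ :=
  (beta ends D φp V + beta ends D φm V) / 2

/-- A subset `∅ ⊊ V ⊊ ι` is extremal if `β⁺(V) > 0` and `β⁻(V) < 0`. -/
def Extremal (ends : Ed → Sym2 ι) (D : ι → ℤ) (φp φm : ι → ℝ) (V : Set ι) : Prop :=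
  V.Nonempty ∧ V ≠ Set.univ ∧ 0 < beta ends D φp V ∧ beta ends D φm V < 0

/-- `ext(G,D)`: extremal subsets which are connected with connected complement. -/
def extSet (ends : Ed → Sym2 ι) (D : ι → ℤ) (φp φm : ι → ℝ) : Set (Set ι) :=
  {V | Extremal ends D φp φm V ∧ IsConnectedOn ends V ∧ IsConnectedOn ends Vᶜ}

/-- `nex(V') = ⋂ {V ∈ V_• : V' ⊊ V}` (the empty intersection being everything). -/
def nex (Vb : Set (Set ι)) (V' : Set ι) : Set ι :=
  ⋂₀ {V | V ∈ Vb ∧ V' ⊂ V}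

/-- A full forest in `ext(G,D)`. -/
def IsFullForest (ends : Ed → Sym2 ι) (D : ι → ℤ) (φp φm : ι → ℝ)
    (Vb : Set (Set ι)) : Prop :=
  Vb ⊆ extSet ends D φp φm ∧
  (∀ V ∈ Vb, IsChain (· ⊆ ·) {W | W ∈ Vb ∧ W ⊆ V}) ∧
  (∀ V ∈ extSet ends D φp φm,
    (∀ W ∈ extSet ends D φp φm, V ⊆ W → V = W) → V ∈ Vb) ∧
  (∀ e : Ed, ∃ V ∈ Vb, e ∈ edgesBetween ends V Vᶜ)

/-- `L` is a lower subset of `ext`. -/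
def IsLowerSubset (ext L : Set (Set ι)) : Prop :=
  L ⊆ ext ∧ ∀ V ∈ L, ∀ W ∈ ext, W ⊆ V → W ∈ L

/-- A vine function on a lower set `L ⊆ ext`. -/
def IsVineFunction (ends : Ed → Sym2 ι) (ext L : Set (Set ι))
    (α : Set ι → Set Ed) : Prop :=
  (∀ V ∈ L, α V ⊆ edgesBetween ends V Vᶜ) ∧
  ∀ V ∈ L, (α V = ∅ ↔
    ∃ V' ∈ ext, V' ⊂ V ∧ (α V' ∩ edgesBetween ends V Vᶜ).Nonempty)

/-- A full vine function: a vine function with `L = ext` whose values cover all edges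
(extended by `∅` outside `ext`). -/
def IsFullVine (ends : Ed → Sym2 ι) (ext : Set (Set ι)) (α : Set ι → Set Ed) : Prop :=
  IsVineFunction ends ext ext α ∧ (⋃ V ∈ ext, α V) = (Set.univ : Set Ed) ∧
  ∀ V ∉ ext, α V = ∅

/-- The vine function associated to a full forest:
`α_{V_•}(V) = E(V, nex(V) \ V)` for `V ∈ V_•`, and `∅` otherwise. -/
def alphaOf (ends : Ed → Sym2 ι) (Vb : Set (Set ι)) (V : Set ι) : Set Ed :=
  {e | V ∈ Vb ∧ e ∈ edgesBetween ends V (nex Vb V \ V)}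


/-!
The cut function is submodular: `β(V₁ ∩ V₂) + β(V₁ ∪ V₂) + |E(V₁ \ V₂, V₂ \ V₁)| = β(V₁) + β(V₂)`
for both `φ⁺` and `φ⁻`. As `β⁰` vanishes on `V₁, V₂` by (C) and is nonnegative by (B), no edge
joins `V₁ \ V₂` to `V₂ \ V₁` and `β⁰(V₁ ∩ V₂) = 0`. If `V₁ ∪ V₂ ≠ ι`, then `V₁ ∩ V₂ ∋ v₁` is proper,
so `β⁺ > 0` forces `β⁻(V₁ ∩ V₂) < 0`, and some component `W` of `V₁ ∩ V₂` is extremal with connected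
complement. Then `W ∈ L`, and the vine condition yields an edge of `|α|` leaving `W`; as it leaves
neither `V₁` nor `V₂`, it stays inside `V₁ ∩ V₂`, which is impossible for a component.
-/

open Set Relation

section Cuts

variable {ends : Ed → Sym2 ι}

lemma mem_edgesBetween_iff_of_ends_eq {e : Ed} {x y : ι} (h : ends e = s(x, y)) {V W : Set ι} :
    e ∈ edgesBetween ends V W ↔ (x ∈ V ∧ y ∈ W) ∨ (y ∈ V ∧ x ∈ W) := by
  constructor
  · rintro ⟨a, b, hab, ha, hb⟩
    rcases Sym2.eq_iff.mp (h.symm.trans hab) with ⟨rfl, rfl⟩ | ⟨rfl, rfl⟩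
    exacts [Or.inl ⟨ha, hb⟩, Or.inr ⟨ha, hb⟩]
  · rintro (⟨hx, hy⟩ | ⟨hy, hx⟩)
    exacts [⟨x, y, h, hx, hy⟩, ⟨y, x, h.trans Sym2.eq_swap, hy, hx⟩]

lemma edgesBetween_comm (V W : Set ι) : edgesBetween ends V W = edgesBetween ends W V := by
  ext e
  obtain ⟨⟨x, y⟩, h⟩ := Quot.exists_rep (ends e)
  rw [mem_edgesBetween_iff_of_ends_eq h.symm, mem_edgesBetween_iff_of_ends_eq h.symm]
  tauto

lemma edgesBetween_sdiff_subset {W T : Set ι} (S : Set ι) (hWT : W ⊆ T) :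
    edgesBetween ends W (S \ W) ⊆ edgesBetween ends W (T \ W) ∪ edgesBetween ends T (S \ T) := by
  rintro e ⟨a, b, he, ha, hbS, hbW⟩
  by_cases hbT : b ∈ T
  exacts [Or.inl ⟨a, b, he, ha, hbT, hbW⟩, Or.inr ⟨a, b, he, hWT ha, hbS, hbT⟩]

lemma edgesBetween_compl_subset {W T : Set ι} (hWT : W ⊆ T) :
    edgesBetween ends W Wᶜ ⊆ edgesBetween ends W (T \ W) ∪ edgesBetween ends T Tᶜ := by
  simpa only [compl_eq_univ_sdiff] using edgesBetween_sdiff_subset (ends := ends) univ hWT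

lemma edgesBetween_sdiff_eq_empty_of_subset {W T S : Set ι} (hWT : W ⊆ T)
    (hW : edgesBetween ends W (T \ W) = ∅) (hT : edgesBetween ends T (S \ T) = ∅) :
    edgesBetween ends W (S \ W) = ∅ :=
  subset_empty_iff.mp <| (edgesBetween_sdiff_subset S hWT).trans (by rw [hW, hT, union_empty])

lemma edgesBetween_inter_compl_subset (A B : Set ι) :
    edgesBetween ends (A ∩ B) (A ∩ B)ᶜ ⊆ edgesBetween ends A Aᶜ ∪ edgesBetween ends B Bᶜ := by
  rintro e ⟨a, b, he, ⟨haA, haB⟩, hb⟩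
  rcases not_and_or.mp hb with hbA | hbB
  exacts [Or.inl ⟨a, b, he, haA, hbA⟩, Or.inr ⟨a, b, he, haB, hbB⟩]

lemma edgesBetween_compl_inter_subset {A B : Set ι} (hAB : A ∪ B = univ) :
    edgesBetween ends A Aᶜ ∩ edgesBetween ends B Bᶜ ⊆ edgesBetween ends (A \ B) (B \ A) := by
  rintro e ⟨⟨a, b, he, haA, hbA⟩, ⟨c, d, he', hcB, hdB⟩⟩
  rcases Sym2.eq_iff.mp (he.symm.trans he') with ⟨rfl, rfl⟩ | ⟨rfl, rfl⟩
  · exact ((hAB ▸ mem_univ b : b ∈ A ∪ B).elim hbA hdB).elim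
  · exact ⟨a, b, he, ⟨haA, hdB⟩, ⟨hcB, hbA⟩⟩

/-- Each edge contributes equally to both sides; an edge joining `A \ B` to `B \ A` is cut by
`A` and by `B` but neither by `A ∩ B` nor by `A ∪ B`. -/
lemma ncard_edgesBetween_inter_add_union [Fintype Ed] (A B : Set ι) :
    (edgesBetween ends (A ∩ B) (A ∩ B)ᶜ).ncard + (edgesBetween ends (A ∪ B) (A ∪ B)ᶜ).ncard
      + 2 * (edgesBetween ends (A \ B) (B \ A)).ncard
    = (edgesBetween ends A Aᶜ).ncard + (edgesBetween ends B Bᶜ).ncard := by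
  classical
  have hcount (s : Set Ed) : s.ncard = ∑ e, if e ∈ s then 1 else 0 := by
    rw [ncard_eq_toFinset_card', ← Finset.card_filter]
    congr 1; ext; simp
  simp only [hcount, Finset.mul_sum, ← Finset.sum_add_distrib]
  refine Finset.sum_congr rfl fun e _ => ?_
  obtain ⟨⟨x, y⟩, h⟩ := Quot.exists_rep (ends e)
  simp only [mem_edgesBetween_iff_of_ends_eq h.symm]
  by_cases hxA : x ∈ A <;> by_cases hxB : x ∈ B <;> by_cases hyA : y ∈ A <;> by_cases hyB : y ∈ B <;>
    simp [hxA, hxB, hyA, hyB]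

end Cuts

section Beta

lemma beta_empty (ends : Ed → Sym2 ι) (D : ι → ℤ) (φ : ι → ℝ) : beta ends D φ ∅ = 0 := by
  simp [beta, edgesBetween]

variable [Fintype ι] [Fintype Ed] (ends : Ed → Sym2 ι) (D : ι → ℤ)

lemma beta_inter_add_beta_union (φ : ι → ℝ) (A B : Set ι) :
    beta ends D φ (A ∩ B) + beta ends D φ (A ∪ B)
      + (edgesBetween ends (A \ B) (B \ A)).ncard
    = beta ends D φ A + beta ends D φ B := by
  have hsum := finsum_mem_union_inter (f := fun v => φ v - (D v : ℝ)) A.toFinite B.toFinite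
  have hcut : ((_ + _ + 2 * _ : ℕ) : ℝ) = ((_ + _ : ℕ) : ℝ) :=
    congrArg Nat.cast (ncard_edgesBetween_inter_add_union (ends := ends) A B)
  push_cast at hcut
  simp only [beta]
  linarith

lemma beta_union_of_edgesBetween_eq_empty (φ : ι → ℝ) {A B : Set ι} (hd : Disjoint A B)
    (he : edgesBetween ends A B = ∅) :
    beta ends D φ (A ∪ B) = beta ends D φ A + beta ends D φ B := by
  have h := beta_inter_add_beta_union ends D φ A B
  rw [hd.inter_eq, beta_empty, hd.sdiff_eq_left, hd.symm.sdiff_eq_left, he] at h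
  simpa using h

variable {ends D} {φp φm : ι → ℝ}

lemma edgesBetween_sdiff_eq_empty_and_betaZero_inter_eq_zero
    (hB : ∀ V, 0 ≤ betaZero ends D φp φm V) {A B : Set ι}
    (hA0 : betaZero ends D φp φm A = 0) (hB0 : betaZero ends D φp φm B = 0) :
    edgesBetween ends (A \ B) (B \ A) = ∅ ∧ betaZero ends D φp φm (A ∩ B) = 0 := by
  have hp := beta_inter_add_beta_union ends D φp A B
  have hm := beta_inter_add_beta_union ends D φm A B
  have hinter := hB (A ∩ B)
  have hunion := hB (A ∪ B)
  have hcross : (0 : ℝ) ≤ (edgesBetween ends (A \ B) (B \ A)).ncard := Nat.cast_nonneg _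
  simp only [betaZero] at *
  refine ⟨?_, by linarith⟩
  rw [← ncard_eq_zero]
  exact_mod_cast (show ((edgesBetween ends (A \ B) (B \ A)).ncard : ℝ) = 0 by linarith)

end Beta

section Connectivity

variable {ends : Ed → Sym2 ι}

/-- `IsConnectedOn ends V` unfolds to reachability along `inducedAdj ends V`. -/
def inducedAdj (ends : Ed → Sym2 ι) (V : Set ι) (a b : ι) : Prop :=
  a ∈ V ∧ b ∈ V ∧ ∃ e, ends e = s(a, b)

instance (V : Set ι) : Std.Symm (inducedAdj ends V) where
  symm _ _ := fun ⟨ha, hb, e, he⟩ => ⟨hb, ha, e, he.trans Sym2.eq_swap⟩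

lemma inducedAdj_mono {V W : Set ι} (h : V ⊆ W) {a b : ι} :
    ReflTransGen (inducedAdj ends V) a b → ReflTransGen (inducedAdj ends W) a b :=
  ReflTransGen.mono (fun _ _ (hab : inducedAdj ends V _ _) => ⟨h hab.1, h hab.2.1, hab.2.2⟩) a b

lemma isConnectedOn_of_forall_reach {S T : Set ι} (hT : IsConnectedOn ends T) (hTS : T ⊆ S)
    (hreach : ∀ x ∈ S, ∃ y ∈ T, ReflTransGen (inducedAdj ends S) x y) :
    IsConnectedOn ends S := by
  refine ⟨hT.1.mono hTS, fun u hu w hw => ?_⟩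
  obtain ⟨y, hy, huy⟩ := hreach u hu
  obtain ⟨z, hz, hwz⟩ := hreach w hw
  have hyz : ReflTransGen (inducedAdj ends S) y z := inducedAdj_mono hTS (hT.2 y hy z hz)
  exact huy.trans (hyz.trans (Std.Symm.symm _ _ hwz))

lemma isConnectedOn_singleton (u : ι) : IsConnectedOn ends {u} :=
  ⟨singleton_nonempty u, by rintro _ rfl _ rfl; rfl⟩

lemma isConnectedOn_union {A B : Set ι} (hA : IsConnectedOn ends A) (hB : IsConnectedOn ends B)
    (hAB : (A ∩ B).Nonempty) : IsConnectedOn ends (A ∪ B) := by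
  obtain ⟨z, hzA, hzB⟩ := hAB
  refine isConnectedOn_of_forall_reach hA subset_union_left ?_
  rintro x (hx | hx)
  exacts [⟨x, hx, .refl⟩, ⟨z, hzA, inducedAdj_mono subset_union_right (hB.2 x hx z hzB)⟩]

/-- Following a path of the whole graph towards `Uᶜ`, a vertex outside `W` never enters `W`,
since the only edges into `W` come from `W` or from `Uᶜ`. -/
lemma isConnectedOn_compl_of_subset (hconn : IsConnectedOn ends univ) {W U : Set ι}
    (hWU : W ⊆ U) (hcut : edgesBetween ends W (U \ W) = ∅) (hU : IsConnectedOn ends Uᶜ) :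
    IsConnectedOn ends Wᶜ := by
  obtain ⟨z, hz⟩ := hU.1
  refine isConnectedOn_of_forall_reach hU (compl_subset_compl.mpr hWU) fun x hx => ?_
  have hxz : ReflTransGen (inducedAdj ends univ) x z := hconn.2 x (mem_univ x) z (mem_univ z)
  revert hx
  induction hxz using ReflTransGen.head_induction_on with
  | refl => exact fun _ => ⟨z, hz, .refl⟩
  | @head a c hac _ ih =>
    intro hx
    by_cases haU : a ∈ U
    · obtain ⟨-, -, e, he⟩ := hac
      have hc : c ∈ Wᶜ := fun hcW =>
        (hcut.subset ⟨c, a, he.trans Sym2.eq_swap, hcW, haU, hx⟩ : e ∈ (∅ : Set Ed))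
      obtain ⟨y, hy, hcy⟩ := ih hc
      exact ⟨y, hy, .head ⟨hx, hc, e, he⟩ hcy⟩
    · exact ⟨a, haU, .refl⟩

def componentIn (ends : Ed → Sym2 ι) (S : Set ι) (u : ι) : Set ι :=
  {x | x ∈ S ∧ ReflTransGen (inducedAdj ends S) u x}

lemma componentIn_subset (S : Set ι) (u : ι) : componentIn ends S u ⊆ S :=
  fun _ hx => hx.1

lemma mem_componentIn_self {S : Set ι} {u : ι} (hu : u ∈ S) : u ∈ componentIn ends S u :=
  ⟨hu, .refl⟩

lemma edgesBetween_componentIn_sdiff_eq_empty (S : Set ι) (u : ι) :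
    edgesBetween ends (componentIn ends S u) (S \ componentIn ends S u) = ∅ := by
  refine eq_empty_of_forall_notMem ?_
  rintro e ⟨a, b, he, ⟨haS, hua⟩, hbS, hb⟩
  exact hb ⟨hbS, hua.tail ⟨haS, hbS, e, he⟩⟩

lemma isConnectedOn_componentIn {S : Set ι} {u : ι} (hu : u ∈ S) :
    IsConnectedOn ends (componentIn ends S u) := by
  refine isConnectedOn_of_forall_reach (isConnectedOn_singleton u)
    (singleton_subset_iff.mpr (mem_componentIn_self hu)) fun x hx => ⟨u, rfl, ?_⟩
  have hlift : ∀ y, ReflTransGen (inducedAdj ends S) u y →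
      ReflTransGen (inducedAdj ends (componentIn ends S u)) u y := by
    intro y huy
    induction huy with
    | refl => rfl
    | @tail b c hub hbc ih => exact ih.tail ⟨⟨hbc.1, hub⟩, ⟨hbc.2.1, hub.tail hbc⟩, hbc.2.2⟩
  exact Std.Symm.symm _ _ (hlift x hx.2)

end Connectivity

/-- `β` is additive over pieces not joined by edges, so a minimal piece of negative `β` is a single
component. -/
lemma exists_isConnectedOn_beta_neg [Fintype ι] [Fintype Ed] {ends : Ed → Sym2 ι} {D : ι → ℤ}
    {φ : ι → ℝ} {S : Set ι} (hS : beta ends D φ S < 0) :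
    ∃ W ⊆ S, IsConnectedOn ends W ∧ edgesBetween ends W (S \ W) = ∅ ∧ beta ends D φ W < 0 := by
  set P : Set ι → Prop := fun W => W ⊆ S ∧ edgesBetween ends W (S \ W) = ∅ ∧ beta ends D φ W < 0
  have hPS : P S := ⟨subset_rfl, by simp [edgesBetween], hS⟩
  obtain ⟨W, -, ⟨hWS, hWcut, hWneg⟩, hmin⟩ := exists_minimal_le_of_wellFoundedLT P S hPS
  obtain ⟨u, hu⟩ : W.Nonempty := nonempty_iff_ne_empty.mpr <| by
    rintro rfl; exact (beta_empty ends D φ).not_lt hWneg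
  set C := componentIn ends W u
  have hCW : C ⊆ W := componentIn_subset W u
  have hCcut : edgesBetween ends C (W \ C) = ∅ := edgesBetween_componentIn_sdiff_eq_empty W u
  have hsplit : beta ends D φ W = beta ends D φ C + beta ends D φ (W \ C) := by
    rw [← beta_union_of_edgesBetween_eq_empty ends D φ disjoint_sdiff_right hCcut,
      union_sdiff_cancel hCW]
  by_cases hCneg : beta ends D φ C < 0
  · have hPC : P C := ⟨hCW.trans hWS, edgesBetween_sdiff_eq_empty_of_subset hCW hCcut hWcut, hCneg⟩
    have hWC : W = C := (hmin hPC hCW).antisymm hCW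
    exact ⟨W, hWS, hWC ▸ isConnectedOn_componentIn hu, hWcut, hWneg⟩
  · have hrest : edgesBetween ends (W \ C) (W \ (W \ C)) = ∅ := by
      rw [sdiff_sdiff_cancel_left hCW, edgesBetween_comm, hCcut]
    have hPrest : P (W \ C) := ⟨sdiff_subset.trans hWS,
      edgesBetween_sdiff_eq_empty_of_subset sdiff_subset hrest hWcut, by linarith⟩
    exact ((hmin hPrest sdiff_subset hu).2 (mem_componentIn_self hu)).elim

lemma exists_mem_extSet_subset [Fintype ι] [Fintype Ed] {ends : Ed → Sym2 ι} {D : ι → ℤ}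
    {φp φm : ι → ℝ} (hconn : IsConnectedOn ends univ)
    (hA : ∀ V : Set ι, V.Nonempty → V ≠ univ → 0 < beta ends D φp V) {U : Set ι}
    (hU : U ≠ univ) (hUc : IsConnectedOn ends Uᶜ) (hUneg : beta ends D φm U < 0) :
    ∃ W ∈ extSet ends D φp φm, W ⊆ U ∧ edgesBetween ends W (U \ W) = ∅ := by
  obtain ⟨W, hWU, hWc, hWcut, hWneg⟩ := exists_isConnectedOn_beta_neg hUneg
  have hW : W ≠ univ := fun h => hU (univ_subset_iff.mp (h ▸ hWU))
  exact ⟨W, ⟨⟨hWc.1, hW, hA W hWc.1 hW, hWneg⟩, hWc,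
    isConnectedOn_compl_of_subset hconn hWU hWcut hUc⟩, hWU, hWcut⟩

lemma IsVineFunction.inter_edgesBetween_nonempty {ends : Ed → Sym2 ι} {ext L : Set (Set ι)}
    {α : Set ι → Set Ed} (hα : IsVineFunction ends ext L α) (hL : IsLowerSubset ext L)
    {W : Set ι} (hW : W ∈ L) : ((⋃ V ∈ L, α V) ∩ edgesBetween ends W Wᶜ).Nonempty := by
  by_cases hαW : α W = ∅
  · obtain ⟨V', hV', hV'W, e, heV', heW⟩ := (hα.2 W hW).mp hαW
    exact ⟨e, mem_biUnion (hL.2 W hW V' hV' hV'W.subset) heV', heW⟩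
  · obtain ⟨e, he⟩ := nonempty_iff_ne_empty.mpr hαW
    exact ⟨e, mem_biUnion hW he, hα.1 W hW he⟩

/-- Proposition (transversal self-intersection): let `α` be a vine function
on a lower set `L`, and `V₁, V₂ ∈ ext(G,D)` with `E(Vᵢ,Vᵢ^c) ∩ |α| = ∅` and
such that every element of `ext(G,D)` contained in `V₁ ∩ V₂` lies in `L`.
Then `V₁ ∪ V₂ = ι`, and consequently `E(V₁,V₁^c) ∩ E(V₂,V₂^c) = ∅`. -/
theorem vine_transversal {ι Ed : Type*} [Fintype ι] [Fintype Ed]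
    (ends : Ed → Sym2 ι) (D : ι → ℤ) (φp φm : ι → ℝ)
    (hconn : IsConnectedOn ends (Set.univ : Set ι))
    (hA : ∀ V : Set ι, V.Nonempty → V ≠ Set.univ → 0 < beta ends D φp V)
    (hB : ∀ V : Set ι, 0 ≤ betaZero ends D φp φm V)
    (hC : ∀ V : Set ι, beta ends D φm V < 0 → betaZero ends D φp φm V = 0)
    (v₁ : ι) (hstar : ∀ V : Set ι, Extremal ends D φp φm V → v₁ ∈ V)
    (L : Set (Set ι)) (hL : IsLowerSubset (extSet ends D φp φm) L)
    (α : Set ι → Set Ed) (hα : IsVineFunction ends (extSet ends D φp φm) L α)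
    (V₁ V₂ : Set ι)
    (h₁ : V₁ ∈ extSet ends D φp φm) (h₂ : V₂ ∈ extSet ends D φp φm)
    (ha₁ : edgesBetween ends V₁ V₁ᶜ ∩ (⋃ V ∈ L, α V) = ∅)
    (ha₂ : edgesBetween ends V₂ V₂ᶜ ∩ (⋃ V ∈ L, α V) = ∅)
    (hb : ∀ V ∈ extSet ends D φp φm, V ⊆ V₁ ∩ V₂ → V ∈ L) :
    V₁ ∪ V₂ = Set.univ ∧
    edgesBetween ends V₁ V₁ᶜ ∩ edgesBetween ends V₂ V₂ᶜ = ∅ := by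
  obtain ⟨hex₁, -, hcc₁⟩ := h₁
  obtain ⟨hex₂, -, hcc₂⟩ := h₂
  obtain ⟨hcross, hzero⟩ := edgesBetween_sdiff_eq_empty_and_betaZero_inter_eq_zero hB
    (hC V₁ hex₁.2.2.2) (hC V₂ hex₂.2.2.2)
  have hunion : V₁ ∪ V₂ = univ := by
    by_contra hne
    have hUc : IsConnectedOn ends (V₁ ∩ V₂)ᶜ := compl_inter V₁ V₂ ▸
      isConnectedOn_union hcc₁ hcc₂ (by rwa [← compl_union, nonempty_compl])
    have hU : V₁ ∩ V₂ ≠ univ := fun h => hex₁.2.1 (univ_subset_iff.mp (h ▸ inter_subset_left))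
    have hUne : (V₁ ∩ V₂).Nonempty := ⟨v₁, hstar V₁ hex₁, hstar V₂ hex₂⟩
    have hUneg : beta ends D φm (V₁ ∩ V₂) < 0 := by
      have := hA _ hUne hU
      unfold betaZero at hzero
      linarith
    obtain ⟨W, hWext, hWU, hWcut⟩ := exists_mem_extSet_subset hconn hA hU hUc hUneg
    obtain ⟨e, heα, heW⟩ := hα.inter_edgesBetween_nonempty hL (hb W hWext hWU)
    rcases edgesBetween_compl_subset hWU heW with he | he
    · exact (hWcut.subset he : e ∈ (∅ : Set Ed))
    rcases edgesBetween_inter_compl_subset V₁ V₂ he with he | he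
    exacts [ha₁.subset ⟨he, heα⟩, ha₂.subset ⟨he, heα⟩]
  exact ⟨hunion, subset_empty_iff.mp (hcross ▸ edgesBetween_compl_inter_subset hunion)⟩

end Paper
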